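/- arXiv:2009.10923 — 2 statements merged into one kernel-verified Lean document; each statement's English description precedes it below -/
import Mathlib

section
/- For integers K and i with 1 ≤ i < K, the rate of the new scheme is at least the Maddah-Ali–Niesen rate: ⌈K(K−i)/t(K,i)⌉ · (1/K) ≥ (K−i)/(i+1), where t(K,i) = 2 + ⌊i/(K−i+1)⌋ + ⌊(i−1)/(K−i+1)⌋. -/
def t (K i : ℕ) : ℕ := 2 + i / (K - i + 1) + (i - 1) / (K - i + 1)

def Λ (K i : ℕ) : ℕ := ⌈((K * (K - i) : ℕ) : ℚ) / (t K i)⌉₊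

/-! Since `K - i + 1 ≥ 2`, the two floors in `t K i` are at most `⌊i/2⌋ + ⌊(i-1)/2⌋ = i - 1`, so
`t K i ≤ i + 1`: the new scheme divides `K (K - i)` by at most the Maddah-Ali–Niesen
denominator `i + 1`, and rounding up only increases the rate. -/

lemma Nat.div_add_pred_div_le {a d : ℕ} (hd : 2 ≤ d) : a / d + (a - 1) / d ≤ a - 1 := by
  have h₁ : a / d ≤ a / 2 := Nat.div_le_div_left hd two_pos
  have h₂ : (a - 1) / d ≤ (a - 1) / 2 := Nat.div_le_div_left hd two_pos
  omega

lemma t_pos (K i : ℕ) : 0 < t K i := by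
  unfold t
  positivity

lemma t_le_succ {K i : ℕ} (hi : 1 ≤ i) (hiK : i < K) : t K i ≤ i + 1 := by
  have := Nat.div_add_pred_div_le (a := i) (d := K - i + 1) (by omega)
  unfold t
  omega

lemma div_succ_le_Λ {K i : ℕ} (hi : 1 ≤ i) (hiK : i < K) :
    ((K * (K - i) : ℕ) : ℚ) / (i + 1) ≤ Λ K i :=
  calc ((K * (K - i) : ℕ) : ℚ) / (i + 1)
      ≤ ((K * (K - i) : ℕ) : ℚ) / (t K i) := by
        gcongr
        · exact_mod_cast t_pos K i
        · exact_mod_cast t_le_succ hi hiK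
    _ ≤ Λ K i := Nat.le_ceil _

theorem stmt_5 (K i : ℕ) (hi : 1 ≤ i) (hiK : i < K) :
    (Λ K i : ℚ) * (1 / K) ≥ ((K : ℚ) - i) / (i + 1) := by
  have hK : (K : ℚ) ≠ 0 := by exact_mod_cast (by omega : K ≠ 0)
  calc ((K : ℚ) - i) / (i + 1)
      = ((K * (K - i) : ℕ) : ℚ) / (i + 1) * (1 / K) := by
        push_cast [Nat.cast_sub hiK.le]
        field_simp
    _ ≤ (Λ K i : ℚ) * (1 / K) := by
        gcongr
        exact div_succ_le_Λ hi hiK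
end

section
/- For every integer K ≥ 4 not divisible by 3, setting i = K−2: Λ(K,i) = ⌈2K/(2 + ⌊(K−2)/3⌋ + ⌊(K−3)/3⌋)⌉ = 4. (Hence for L = K−2 with 3 ∤ K, the new scheme achieves rate 4/K, exceeding the optimum 3/K by exactly 1/K.) -/
theorem Nat.ceil_natCast_div_eq_succ {α : Type*} [Field α] [LinearOrder α] [IsStrictOrderedRing α]
    [FloorSemiring α] {a b n : ℕ} (hlt : n * b < a) (hle : a ≤ (n + 1) * b) :
    ⌈(a / b : α)⌉₊ = n + 1 := by
  have hb : (0 : α) < b := by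
    exact_mod_cast Nat.pos_of_ne_zero fun hb => by simp [hb] at hlt hle; omega
  rw [Nat.ceil_eq_iff (Nat.succ_ne_zero n), Nat.succ_sub_one, Nat.cast_succ,
    lt_div_iff₀ hb, div_le_iff₀ hb]
  exact ⟨mod_cast hlt, mod_cast hle⟩

theorem t_self_sub_two {K : ℕ} (hK : 3 ≤ K) : t K (K - 2) = 2 * K / 3 := by
  rw [t, show K - (K - 2) + 1 = 3 by omega]
  have hr : K % 3 < 3 := Nat.mod_lt K (by norm_num)
  interval_cases h : K % 3 <;> omega

theorem stmt_9 (K : ℕ) (hK : 4 ≤ K) (h3 : ¬ (3 ∣ K)) :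
    Λ K (K - 2) = 4 := by
  rw [Λ, t_self_sub_two (by omega), show K - (K - 2) = 2 by omega]
  exact Nat.ceil_natCast_div_eq_succ (n := 3) (by omega) (by omega)
end
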